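/- arXiv:2311.02701 — 4 statements merged into one kernel-verified Lean document; each statement's English description precedes it below -/
import Mathlib

section
/- Let $[a,b] \subset \mathbb{R}$, $z \in \mathbb{R} \setminus [a,b]$ and $w \in \mathbb{C}$. Define $h_{w,z}(t) = (t-w)/(t-z)$, $\lambda^\star = (|w|^2 - z\,\mathrm{Re}(w))/(\mathrm{Re}(w) - z)$ (when $\mathrm{Re}(w) \neq z$), and $h^\star = |h_{w,z}(\lambda^\star)|$ if $\lambda^\star \in [a,b]$ and $h^\star = 0$ otherwise. Then $\max_{\lambda \in [a,b]} |h_{w,z}(\lambda)| = \max\{ |(a-w)/(a-z)|, |(b-w)/(b-z)|, h^\star \}$. -/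
/-!
Write `u + iv` for `w`. On `[a,b]` the function `t ↦ |h_{w,z}(t)|² = ((t-u)² + v²)/(t-z)²` is smooth,
and its derivative `2((t-u)(u-z) - v²)/(t-z)³` vanishes only at `t = λ⋆`. A maximum of the
continuous function `|h_{w,z}|` on the compact interval `[a,b]` is therefore attained at `a`, `b`,
or at an interior critical point, which can only be `λ⋆`.
-/

open Set

theorem isGreatest_image_Icc_of_isLocalMax_eq {f : ℝ → ℝ} {a b L m : ℝ} (hab : a ≤ b)
    (hf : ContinuousOn f (Icc a b)) (hcrit : ∀ c ∈ Ioo a b, IsLocalMax f c → c = L)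
    (hm : m ≤ max (f a) (f b)) :
    IsGreatest (f '' Icc a b) (max (max (f a) (f b)) (if L ∈ Icc a b then f L else m)) := by
  have hmax_mem : ∀ x ∈ f '' Icc a b, ∀ y ∈ f '' Icc a b, max x y ∈ f '' Icc a b := by
    intro x hx y hy
    rcases max_choice x y with h | h <;> rw [h] <;> assumption
  have ha : f a ∈ f '' Icc a b := mem_image_of_mem f (left_mem_Icc.mpr hab)
  have hb : f b ∈ f '' Icc a b := mem_image_of_mem f (right_mem_Icc.mpr hab)
  constructor
  · split_ifs with hL
    · exact hmax_mem _ (hmax_mem _ ha _ hb) _ (mem_image_of_mem f hL)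
    · rw [max_eq_left hm]
      exact hmax_mem _ ha _ hb
  · rintro _ ⟨t, ht, rfl⟩
    obtain ⟨c, hc, hcmax⟩ := isCompact_Icc.exists_isMaxOn (nonempty_Icc.mpr hab) hf
    refine (hcmax ht).trans ?_
    rcases hc.1.eq_or_lt with rfl | hac
    · exact (le_max_left _ _).trans (le_max_left _ _)
    rcases hc.2.eq_or_lt with rfl | hcb
    · exact (le_max_right _ _).trans (le_max_left _ _)
    obtain rfl := hcrit c ⟨hac, hcb⟩ (hcmax.isLocalMax (Icc_mem_nhds hac hcb))
    rw [if_pos hc]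
    exact le_max_right _ _

theorem norm_sub_div_sub_sq (t z : ℝ) (w : ℂ) :
    ‖((t : ℂ) - w) / ((t : ℂ) - z)‖ ^ 2 = ((t - w.re) ^ 2 + w.im ^ 2) / (t - z) ^ 2 := by
  rw [Complex.sq_norm, map_div₀, Complex.normSq_apply, Complex.normSq_apply]
  simp only [Complex.sub_re, Complex.sub_im, Complex.ofReal_re, Complex.ofReal_im]
  ring

theorem hasDerivAt_sub_sq_add_sq_div_sub_sq (u v z : ℝ) {c : ℝ} (hc : c ≠ z) :
    HasDerivAt (fun t => ((t - u) ^ 2 + v ^ 2) / (t - z) ^ 2)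
      (2 * ((c - u) * (u - z) - v ^ 2) / (c - z) ^ 3) c := by
  have hcz : c - z ≠ 0 := sub_ne_zero.mpr hc
  have hnum : HasDerivAt (fun t => (t - u) ^ 2 + v ^ 2) (2 * (c - u)) c := by
    simpa using (((hasDerivAt_id c).sub_const u).fun_pow 2).add_const (v ^ 2)
  have hden : HasDerivAt (fun t => (t - z) ^ 2) (2 * (c - z)) c := by
    simpa using ((hasDerivAt_id c).sub_const z).fun_pow 2
  refine (hnum.fun_div hden (pow_ne_zero 2 hcz)).congr_deriv ?_
  field_simp
  ring

theorem eq_of_isLocalMax_norm_sub_div_sub {z c : ℝ} {w : ℂ} (hre : w.re ≠ z) (hc : c ≠ z)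
    (hmax : IsLocalMax (fun t : ℝ => ‖((t : ℂ) - w) / ((t : ℂ) - z)‖) c) :
    c = (‖w‖ ^ 2 - z * w.re) / (w.re - z) := by
  have hmax_sq : IsLocalMax (fun t => ((t - w.re) ^ 2 + w.im ^ 2) / (t - z) ^ 2) c := by
    filter_upwards [hmax] with t ht
    rw [← norm_sub_div_sub_sq, ← norm_sub_div_sub_sq]
    exact pow_le_pow_left₀ (norm_nonneg _) ht 2
  have hcrit := hmax_sq.hasDerivAt_eq_zero (hasDerivAt_sub_sq_add_sq_div_sub_sq _ _ _ hc)
  have hkey : (c - w.re) * (w.re - z) = w.im ^ 2 := by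
    have := pow_ne_zero 3 (sub_ne_zero.mpr hc)
    simp only [div_eq_zero_iff, this, or_false, mul_eq_zero, two_ne_zero, false_or] at hcrit
    linarith
  rw [eq_div_iff (sub_ne_zero.mpr hre), Complex.sq_norm, Complex.normSq_apply]
  linear_combination hkey

/-- Lemma 3.1 (generalization): exact value of `‖h_{w,z}‖_{[a,b]}` for real `z ∉ [a,b]`
and complex `w`. -/
theorem stmt_0 (a b z : ℝ) (w : ℂ) (hab : a ≤ b) (hz : z ∉ Set.Icc a b)
    (hre : w.re ≠ z) :
    IsGreatest ((fun t : ℝ => ‖((t : ℂ) - w) / ((t : ℂ) - z)‖) '' Set.Icc a b)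
      (max (max (‖((a : ℂ) - w) / ((a : ℂ) - z)‖)
                (‖((b : ℂ) - w) / ((b : ℂ) - z)‖))
        (if ((‖w‖ ^ 2 - z * w.re) / (w.re - z)) ∈ Set.Icc a b then
            norm (((((‖w‖ ^ 2 - z * w.re) / (w.re - z) : ℝ)) - w) /
              ((((‖w‖ ^ 2 - z * w.re) / (w.re - z) : ℝ)) - z))
          else 0)) := by
  have hne : ∀ t ∈ Icc a b, t ≠ z := fun t ht h => hz (h ▸ ht)
  refine isGreatest_image_Icc_of_isLocalMax_eq hab ?_
    (fun c hc hmax => eq_of_isLocalMax_norm_sub_div_sub hre (hne c (Ioo_subset_Icc_self hc)) hmax)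
    (le_max_of_le_left (norm_nonneg _))
  refine ContinuousOn.norm (ContinuousOn.div (by fun_prop) (by fun_prop) fun t ht => ?_)
  exact sub_ne_zero.mpr (Complex.ofReal_injective.ne (hne t ht))
end

section
/- Let $A \in \mathbb{R}^{n \times n}$ and suppose $V_{m+1} = [V_m, \vec v_{m+1}]$ has orthonormal columns and satisfies the rational Arnoldi relation $A V_m K_m + k_{m+1,m} A \vec v_{m+1} \vec e_m^T = V_m H_m + h_{m+1,m} \vec v_{m+1} \vec e_m^T$ with $K_m$ invertible. Then with $A_m = V_m^T A V_m$, for every $z \in \mathbb{C}$: $(A - zI)V_m = V_m(A_m - zI) + (I - V_m V_m^T)(h_{m+1,m} I - k_{m+1,m} A)\vec v_{m+1} \vec e_m^T K_m^{-1}$. -/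
/-!
Write `w = (h_{m+1,m} I - k_{m+1,m} A) v_{m+1}`, so that the rational Arnoldi relation reads
`A Vₘ Kₘ = Vₘ Hₘ + w eₘᵀ`, i.e. `A Vₘ = (Vₘ Hₘ + w eₘᵀ) Kₘ⁻¹`. For any `z`,
`(A - zI)Vₘ - Vₘ(Aₘ - zI) = (I - VₘVₘᵀ) A Vₘ`, and the projector `I - VₘVₘᵀ` annihilates `Vₘ`,
so only the term `w eₘᵀ Kₘ⁻¹` survives. The real relation is carried over to `ℂ` along
`ℝ →+* ℂ`.
-/

open Matrix

theorem Matrix.map_vecMulVec {m n R S : Type*} [NonUnitalNonAssocSemiring R]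
    [NonUnitalNonAssocSemiring S] {F : Type*} [FunLike F R S] [MulHomClass F R S] (f : F)
    (a : m → R) (b : n → R) :
    (vecMulVec a b).map f = vecMulVec (f ∘ a) (f ∘ b) := by
  ext i j
  simp [vecMulVec_apply]

namespace Matrix

variable {R : Type*} [CommRing R] {l m n : Type*} [Fintype m] [Fintype n] [DecidableEq n]

theorem mul_eq_mul_nonsing_inv_of_mul_eq_zero {P : Matrix l m R}
    {V X W : Matrix m n R} {K H : Matrix n n R} (hPV : P * V = 0) (hK : IsUnit K)
    (h : X * K = V * H + W) :
    P * X = P * W * K⁻¹ := by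
  have hX : X = (V * H + W) * K⁻¹ := by
    rw [← h, mul_nonsing_inv_cancel_right _ _ ((isUnit_iff_isUnit_det K).mp hK)]
  rw [hX, ← Matrix.mul_assoc, Matrix.mul_add, ← Matrix.mul_assoc, hPV, Matrix.zero_mul,
    zero_add]

variable [DecidableEq m]

theorem sub_smul_one_mul_eq_add (A : Matrix m m R) (V : Matrix m n R) (z : R) :
    (A - z • 1) * V = V * (Vᵀ * A * V - z • 1) + (1 - V * Vᵀ) * (A * V) := by
  simp only [Matrix.sub_mul, Matrix.mul_sub, Matrix.smul_mul, Matrix.mul_smul, Matrix.one_mul,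
    Matrix.mul_one, Matrix.mul_assoc]
  abel

theorem one_sub_mul_transpose_mul_self {V : Matrix m n R} (hV : Vᵀ * V = 1) :
    (1 - V * Vᵀ) * V = 0 := by
  rw [Matrix.sub_mul, Matrix.mul_assoc, hV, Matrix.one_mul, Matrix.mul_one, sub_self]

theorem sub_smul_one_mul_eq_of_mul_mul_eq {A : Matrix m m R} {V W : Matrix m n R}
    {K H : Matrix n n R} (hV : Vᵀ * V = 1) (hK : IsUnit K) (h : A * V * K = V * H + W)
    (z : R) :
    (A - z • 1) * V = V * (Vᵀ * A * V - z • 1) + (1 - V * Vᵀ) * W * K⁻¹ := by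
  rw [sub_smul_one_mul_eq_add,
    mul_eq_mul_nonsing_inv_of_mul_eq_zero (one_sub_mul_transpose_mul_self hV) hK h]

end Matrix

theorem stmt_7_general (n m : ℕ) (A : Matrix (Fin n) (Fin n) ℝ)
    (V : Matrix (Fin n) (Fin (m + 1)) ℝ) (v : Fin n → ℝ)
    (K H : Matrix (Fin (m + 1)) (Fin (m + 1)) ℝ) (hh kk : ℝ)
    (hVV : Vᵀ * V = 1)
    (hK : IsUnit K)
    (harnoldi : A * V * K + kk • Matrix.vecMulVec (A *ᵥ v) (Pi.single (Fin.last m) 1) =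
      V * H + hh • Matrix.vecMulVec v (Pi.single (Fin.last m) 1)) :
    ∀ z : ℂ,
      (A.map Complex.ofReal - z • 1) * V.map Complex.ofReal =
        V.map Complex.ofReal *
            ((V.map Complex.ofReal)ᵀ * A.map Complex.ofReal * V.map Complex.ofReal - z • 1) +
          Matrix.vecMulVec
              ((1 - V.map Complex.ofReal * (V.map Complex.ofReal)ᵀ) *ᵥ
                ((hh : ℂ) • (fun i => (v i : ℂ)) -
                  (kk : ℂ) • (A.map Complex.ofReal *ᵥ fun i => (v i : ℂ))))
              (fun j => ((Pi.single (Fin.last m) 1 : Fin (m + 1) → ℝ) j : ℂ)) *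
            (K.map Complex.ofReal)⁻¹ := by
  intro z
  set f := Complex.ofRealHom
  set e : Fin (m + 1) → ℝ := Pi.single (Fin.last m) 1
  have hVV' : (V.map f)ᵀ * V.map f = 1 := by
    rw [← transpose_map, ← Matrix.map_mul, hVV, Matrix.map_one f (map_zero f) (map_one f)]
  have hw : f ∘ (hh • v - kk • A *ᵥ v) = f hh • (f ∘ v) - f kk • (A.map f *ᵥ (f ∘ v)) := by
    ext i
    simp [RingHom.map_mulVec]
  have harnoldi' : A.map f * V.map f * K.map f =
      V.map f * H.map f + vecMulVec (f hh • (f ∘ v) - f kk • (A.map f *ᵥ (f ∘ v))) (f ∘ e) := by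
    rw [← eq_sub_iff_add_eq, add_sub_assoc, ← smul_vecMulVec, ← smul_vecMulVec,
      ← sub_vecMulVec] at harnoldi
    rw [← hw, ← Matrix.map_vecMulVec, ← Matrix.map_mul, ← Matrix.map_mul, ← Matrix.map_mul,
      ← Matrix.map_add f (map_add f), harnoldi]
  rw [← mul_vecMulVec]
  exact sub_smul_one_mul_eq_of_mul_mul_eq hVV' (hK.map f.mapMatrix) harnoldi' z

/-- Shifted rational Arnoldi relation: for every `z ∈ ℂ`,
`(A - zI)Vₘ = Vₘ(Aₘ - zI) + (I - VₘVₘᵀ)(h_{m+1,m} I - k_{m+1,m} A) v_{m+1} eₘᵀ Kₘ⁻¹`. -/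
theorem stmt_7 (n m : ℕ) (A : Matrix (Fin n) (Fin n) ℝ)
    (V : Matrix (Fin n) (Fin (m + 1)) ℝ) (v : Fin n → ℝ)
    (K H : Matrix (Fin (m + 1)) (Fin (m + 1)) ℝ) (hh kk : ℝ)
    (hVV : Vᵀ * V = 1) (hVv : Vᵀ *ᵥ v = 0) (hvv : v ⬝ᵥ v = 1)
    (hK : IsUnit K)
    (harnoldi : A * V * K + kk • Matrix.vecMulVec (A *ᵥ v) (Pi.single (Fin.last m) 1) =
      V * H + hh • Matrix.vecMulVec v (Pi.single (Fin.last m) 1)) :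
    ∀ z : ℂ,
      (A.map Complex.ofReal - z • 1) * V.map Complex.ofReal =
        V.map Complex.ofReal *
            ((V.map Complex.ofReal)ᵀ * A.map Complex.ofReal * V.map Complex.ofReal - z • 1) +
          Matrix.vecMulVec
              ((1 - V.map Complex.ofReal * (V.map Complex.ofReal)ᵀ) *ᵥ
                ((hh : ℂ) • (fun i => (v i : ℂ)) -
                  (kk : ℂ) • (A.map Complex.ofReal *ᵥ fun i => (v i : ℂ))))
              (fun j => ((Pi.single (Fin.last m) 1 : Fin (m + 1) → ℝ) j : ℂ)) *
            (K.map Complex.ofReal)⁻¹ :=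
  stmt_7_general n m A V v K H hh kk hVV hK harnoldi
end

section
/- Under the rational Arnoldi relation $(A - zI)V_m = V_m(A_m - zI) + (I - V_m V_m^T)(h_{m+1,m} I - k_{m+1,m} A)\vec v_{m+1} \vec e_m^T K_m^{-1}$, with $\vec b = V_m \vec e_1 \|\vec b\|_2$ and $A_m - zI$ invertible, the residual of the Galerkin approximation $\vec x_m(z) = V_m(A_m - zI)^{-1}\vec e_1 \|\vec b\|_2$ satisfies $\vec r_m(z) = \vec b - (A - zI)\vec x_m(z) = -(I - V_m V_m^T)(h_{m+1,m}I - k_{m+1,m}A)\vec v_{m+1} \cdot \big(\vec e_m^T K_m^{-1}(A_m - zI)^{-1}\vec e_1\big)\|\vec b\|_2$. In particular, the residuals for all shifts $z$ are scalar multiples of the single fixed vector $(I - V_mV_m^T)(h_{m+1,m}I - k_{m+1,m}A)\vec v_{m+1}$. -/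
open Matrix

/-! Multiplying the relation `(A - zI)V = V(Aₘ - zI) + u eₘᵀ K⁻¹` on the right by
`(Aₘ - zI)⁻¹ e₁` gives `(A - zI)xₘ(z) = V e₁ ‖b‖ + u (eₘᵀ K⁻¹ (Aₘ - zI)⁻¹ e₁) ‖b‖`, and
`V e₁ ‖b‖ = b`: only the rank-one term survives in the residual. -/

noncomputable def euclNorm {n : ℕ} (b : Fin n → ℝ) : ℝ := Real.sqrt (b ⬝ᵥ b)

namespace Matrix

variable {R ι κ : Type*} [CommRing R] [Fintype ι] [Fintype κ] [DecidableEq κ]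

theorem smul_mulVec_sub_mulVec_eq_smul_of_mul_eq_add_vecMulVec (B : Matrix ι ι R)
    (V : Matrix ι κ R) (M L : Matrix κ κ R) (u : ι → R) (e w : κ → R) (c : R) (hM : IsUnit M)
    (hrel : B * V = V * M + vecMulVec u e * L) :
    c • (V *ᵥ w) - B *ᵥ (c • (V *ᵥ M⁻¹ *ᵥ w)) = (-((e ⬝ᵥ (L *ᵥ M⁻¹ *ᵥ w)) * c)) • u := by
  have hMM : M * M⁻¹ = 1 := M.mul_nonsing_inv ((isUnit_iff_isUnit_det M).mp hM)
  have hBV : B *ᵥ (V *ᵥ M⁻¹ *ᵥ w) = V *ᵥ w + (e ⬝ᵥ (L *ᵥ M⁻¹ *ᵥ w)) • u := by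
    rw [mulVec_mulVec, hrel, add_mulVec, mulVec_mulVec _ (V * M), Matrix.mul_assoc, hMM,
      Matrix.mul_one, ← mulVec_mulVec, vecMulVec_mulVec, op_smul_eq_smul]
  rw [mulVec_smul, hBV, smul_add, smul_smul, mul_comm c, sub_add_cancel_left, neg_smul]

end Matrix

theorem stmt_8_general (n m : ℕ) (A : Matrix (Fin n) (Fin n) ℝ)
    (V : Matrix (Fin n) (Fin (m + 1)) ℝ) (v : Fin n → ℝ)
    (K : Matrix (Fin (m + 1)) (Fin (m + 1)) ℝ) (hh kk : ℝ) (b : Fin n → ℝ) (z : ℂ)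
    (hb : b = euclNorm b • (V *ᵥ Pi.single 0 1))
    (hAm : IsUnit ((V.map Complex.ofReal)ᵀ * A.map Complex.ofReal * V.map Complex.ofReal
      - z • 1))
    (hrel : (A.map Complex.ofReal - z • 1) * V.map Complex.ofReal =
      V.map Complex.ofReal *
          ((V.map Complex.ofReal)ᵀ * A.map Complex.ofReal * V.map Complex.ofReal - z • 1) +
        Matrix.vecMulVec
            ((1 - V.map Complex.ofReal * (V.map Complex.ofReal)ᵀ) *ᵥ
              ((hh : ℂ) • (fun i => (v i : ℂ)) -
                (kk : ℂ) • (A.map Complex.ofReal *ᵥ fun i => (v i : ℂ))))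
            (fun j => ((Pi.single (Fin.last m) 1 : Fin (m + 1) → ℝ) j : ℂ)) *
          (K.map Complex.ofReal)⁻¹) :
    (fun i => (b i : ℂ)) -
        (A.map Complex.ofReal - z • 1) *ᵥ
          ((euclNorm b : ℂ) • (V.map Complex.ofReal *ᵥ
            ((V.map Complex.ofReal)ᵀ * A.map Complex.ofReal * V.map Complex.ofReal - z • 1)⁻¹ *ᵥ
              Pi.single 0 1)) =
      (-(((fun j => ((Pi.single (Fin.last m) 1 : Fin (m + 1) → ℝ) j : ℂ)) ⬝ᵥ
            ((K.map Complex.ofReal)⁻¹ *ᵥ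
              ((V.map Complex.ofReal)ᵀ * A.map Complex.ofReal * V.map Complex.ofReal
                - z • 1)⁻¹ *ᵥ Pi.single 0 1)) * (euclNorm b : ℂ))) •
        ((1 - V.map Complex.ofReal * (V.map Complex.ofReal)ᵀ) *ᵥ
          ((hh : ℂ) • (fun i => (v i : ℂ)) -
            (kk : ℂ) • (A.map Complex.ofReal *ᵥ fun i => (v i : ℂ)))) ∧
    ∃ c : ℂ,
      (fun i => (b i : ℂ)) -
          (A.map Complex.ofReal - z • 1) *ᵥ
            ((euclNorm b : ℂ) • (V.map Complex.ofReal *ᵥ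
              ((V.map Complex.ofReal)ᵀ * A.map Complex.ofReal * V.map Complex.ofReal - z • 1)⁻¹ *ᵥ
                Pi.single 0 1)) =
        c • ((1 - V.map Complex.ofReal * (V.map Complex.ofReal)ᵀ) *ᵥ
          ((hh : ℂ) • (fun i => (v i : ℂ)) -
            (kk : ℂ) • (A.map Complex.ofReal *ᵥ fun i => (v i : ℂ)))) := by
  have hbc : (fun i => (b i : ℂ)) =
      (euclNorm b : ℂ) • (V.map Complex.ofReal *ᵥ Pi.single 0 1) := by
    ext i
    rw [congrFun hb i]
    simp
  have hres := smul_mulVec_sub_mulVec_eq_smul_of_mul_eq_add_vecMulVec _ _ _ _ _ _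
    (Pi.single 0 1) (euclNorm b : ℂ) hAm hrel
  rw [hbc]
  exact ⟨hres, _, hres⟩

/-- Under the shifted rational Arnoldi relation, the Galerkin residual
`r_m(z) = b - (A - zI)x_m(z)` equals
`-(I - VVᵀ)(h I - k A)v · (eₘᵀ K⁻¹ (Aₘ - zI)⁻¹ e₁)‖b‖₂`; in particular all shifted
residuals are scalar multiples of the fixed vector `(I - VVᵀ)(h I - k A)v`. -/
theorem stmt_8 (n m : ℕ) (A : Matrix (Fin n) (Fin n) ℝ)
    (V : Matrix (Fin n) (Fin (m + 1)) ℝ) (v : Fin n → ℝ)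
    (K : Matrix (Fin (m + 1)) (Fin (m + 1)) ℝ) (hh kk : ℝ) (b : Fin n → ℝ) (z : ℂ)
    (hVV : Vᵀ * V = 1) (hVv : Vᵀ *ᵥ v = 0) (hK : IsUnit K)
    (hb : b = euclNorm b • (V *ᵥ Pi.single 0 1))
    (hAm : IsUnit ((V.map Complex.ofReal)ᵀ * A.map Complex.ofReal * V.map Complex.ofReal
      - z • 1))
    (hrel : (A.map Complex.ofReal - z • 1) * V.map Complex.ofReal =
      V.map Complex.ofReal *
          ((V.map Complex.ofReal)ᵀ * A.map Complex.ofReal * V.map Complex.ofReal - z • 1) +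
        Matrix.vecMulVec
            ((1 - V.map Complex.ofReal * (V.map Complex.ofReal)ᵀ) *ᵥ
              ((hh : ℂ) • (fun i => (v i : ℂ)) -
                (kk : ℂ) • (A.map Complex.ofReal *ᵥ fun i => (v i : ℂ))))
            (fun j => ((Pi.single (Fin.last m) 1 : Fin (m + 1) → ℝ) j : ℂ)) *
          (K.map Complex.ofReal)⁻¹) :
    (fun i => (b i : ℂ)) -
        (A.map Complex.ofReal - z • 1) *ᵥ
          ((euclNorm b : ℂ) • (V.map Complex.ofReal *ᵥ
            ((V.map Complex.ofReal)ᵀ * A.map Complex.ofReal * V.map Complex.ofReal - z • 1)⁻¹ *ᵥ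
              Pi.single 0 1)) =
      (-(((fun j => ((Pi.single (Fin.last m) 1 : Fin (m + 1) → ℝ) j : ℂ)) ⬝ᵥ
            ((K.map Complex.ofReal)⁻¹ *ᵥ
              ((V.map Complex.ofReal)ᵀ * A.map Complex.ofReal * V.map Complex.ofReal
                - z • 1)⁻¹ *ᵥ Pi.single 0 1)) * (euclNorm b : ℂ))) •
        ((1 - V.map Complex.ofReal * (V.map Complex.ofReal)ᵀ) *ᵥ
          ((hh : ℂ) • (fun i => (v i : ℂ)) -
            (kk : ℂ) • (A.map Complex.ofReal *ᵥ fun i => (v i : ℂ)))) ∧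
    ∃ c : ℂ,
      (fun i => (b i : ℂ)) -
          (A.map Complex.ofReal - z • 1) *ᵥ
            ((euclNorm b : ℂ) • (V.map Complex.ofReal *ᵥ
              ((V.map Complex.ofReal)ᵀ * A.map Complex.ofReal * V.map Complex.ofReal - z • 1)⁻¹ *ᵥ
                Pi.single 0 1)) =
        c • ((1 - V.map Complex.ofReal * (V.map Complex.ofReal)ᵀ) *ᵥ
          ((hh : ℂ) • (fun i => (v i : ℂ)) -
            (kk : ℂ) • (A.map Complex.ofReal *ᵥ fun i => (v i : ℂ)))) :=
  stmt_8_general n m A V v K hh kk b z hb hAm hrel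
end

section
/- In the setting of the rational Arnoldi decomposition with $\xi_m = \infty$ (i.e., $k_{m+1,m} = 0$), the residual of the shifted Galerkin approximation satisfies $\vec r_m(z) = -h_{m+1,m} \vec v_{m+1} \cdot \big(\vec e_m^T K_m^{-1}(A_m - zI)^{-1}\vec e_1\big)\|\vec b\|_2$; i.e., for every shift $z$ the residual is collinear with the next basis vector $\vec v_{m+1}$. -/
/-!
Right-multiplying the Arnoldi relation by `K⁻¹` gives `A V = V Aₘ + h v eₘᵀ K⁻¹` with
`Aₘ = H K⁻¹`. For `y = (Aₘ - zI)⁻¹ e₁` this yields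
`(A - zI) V y = V (Aₘ - zI) y + h (eₘᵀ K⁻¹ y) v = V e₁ + h (eₘᵀ K⁻¹ y) v`,
and the term `V e₁` cancels against `b = ‖b‖ V e₁`. The real data are first pushed to `ℂ`.
-/

open Matrix

/-- The Euclidean norm of a real vector. -/
noncomputable def enorm₂ {n : ℕ} (b : Fin n → ℝ) : ℝ := Real.sqrt (b ⬝ᵥ b)

namespace Matrix

variable {R S : Type*} [CommRing R] [CommRing S] {ι κ : Type*}

lemma map_nonsing_inv [Fintype κ] [DecidableEq κ] (f : R →+* S) {K : Matrix κ κ R}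
    (hK : IsUnit K) : (K.map f)⁻¹ = K⁻¹.map f := by
  refine inv_eq_right_inv ?_
  rw [← Matrix.map_mul, mul_nonsing_inv K ((isUnit_iff_isUnit_det K).mp hK),
    Matrix.map_one _ f.map_zero f.map_one]

lemma map_vecMulVec_s9 (f : R →+* S) (w : ι → R) (e : κ → R) :
    (vecMulVec w e).map f = vecMulVec (f ∘ w) (f ∘ e) := by
  ext i j
  simp [vecMulVec_apply]

variable [Fintype ι] [Fintype κ] [DecidableEq κ]
variable {A : Matrix ι ι R} {V : Matrix ι κ R} {K H : Matrix κ κ R} {h : R} {w : ι → R}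
  {e : κ → R}

lemma mulVec_mulVec_of_rationalArnoldi (harnoldi : A * V * K = V * H + h • vecMulVec w e)
    (hK : IsUnit K) (y : κ → R) :
    A *ᵥ (V *ᵥ y) = V *ᵥ ((H * K⁻¹) *ᵥ y) + (h * (e ⬝ᵥ K⁻¹ *ᵥ y)) • w := by
  have hy : y = K *ᵥ (K⁻¹ *ᵥ y) := by
    rw [mulVec_mulVec, mul_nonsing_inv K ((isUnit_iff_isUnit_det K).mp hK), one_mulVec]
  conv_lhs => rw [hy, mulVec_mulVec, mulVec_mulVec, harnoldi]
  rw [add_mulVec, smul_mulVec, vecMulVec_mulVec, op_smul_eq_smul, ← mulVec_mulVec,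
    ← mulVec_mulVec, smul_smul]

lemma sub_smul_one_mulVec_mulVec_of_rationalArnoldi [DecidableEq ι]
    (harnoldi : A * V * K = V * H + h • vecMulVec w e) (hK : IsUnit K) {z : R} {y e₁ : κ → R}
    (hy : (H * K⁻¹ - z • 1) *ᵥ y = e₁) :
    (A - z • 1) *ᵥ (V *ᵥ y) = V *ᵥ e₁ + (h * (e ⬝ᵥ K⁻¹ *ᵥ y)) • w := by
  have hHy : (H * K⁻¹) *ᵥ y = e₁ + z • y := by
    rw [← hy, sub_mulVec, smul_mulVec, one_mulVec, sub_add_cancel]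
  rw [sub_mulVec, mulVec_mulVec_of_rationalArnoldi harnoldi hK, hHy, mulVec_add, smul_mulVec,
    one_mulVec, mulVec_smul]
  abel

lemma galerkin_residual_of_rationalArnoldi [DecidableEq ι]
    (harnoldi : A * V * K = V * H + h • vecMulVec w e) (hK : IsUnit K) {z : R}
    (hM : IsUnit (H * K⁻¹ - z • 1)) (c : R) (e₁ : κ → R) :
    c • (V *ᵥ e₁) - (A - z • 1) *ᵥ (c • (V *ᵥ ((H * K⁻¹ - z • 1)⁻¹ *ᵥ e₁))) =
      -(h * ((e ⬝ᵥ (K⁻¹ *ᵥ (H * K⁻¹ - z • 1)⁻¹ *ᵥ e₁)) * c)) • w := by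
  have hy : (H * K⁻¹ - z • 1) *ᵥ ((H * K⁻¹ - z • 1)⁻¹ *ᵥ e₁) = e₁ := by
    rw [mulVec_mulVec, mul_nonsing_inv _ ((isUnit_iff_isUnit_det _).mp hM), one_mulVec]
  rw [mulVec_smul, sub_smul_one_mulVec_mulVec_of_rationalArnoldi harnoldi hK hy, smul_add,
    smul_smul, neg_smul, mul_comm c, mul_assoc]
  abel

end Matrix

theorem stmt_9_general (n m : ℕ) (A : Matrix (Fin n) (Fin n) ℝ)
    (V : Matrix (Fin n) (Fin (m + 1)) ℝ) (v : Fin n → ℝ)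
    (K H : Matrix (Fin (m + 1)) (Fin (m + 1)) ℝ) (hh : ℝ) (b : Fin n → ℝ) (z : ℂ)
    (hK : IsUnit K)
    (harnoldi : A * V * K = V * H + hh • Matrix.vecMulVec v (Pi.single (Fin.last m) 1))
    (hHK : Vᵀ * A * V = H * K⁻¹)
    (hb : b = enorm₂ b • (V *ᵥ Pi.single 0 1))
    (hAm : IsUnit ((V.map Complex.ofReal)ᵀ * A.map Complex.ofReal * V.map Complex.ofReal
      - z • 1)) :
    (fun i => (b i : ℂ)) -
        (A.map Complex.ofReal - z • 1) *ᵥ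
          ((enorm₂ b : ℂ) • (V.map Complex.ofReal *ᵥ
            ((V.map Complex.ofReal)ᵀ * A.map Complex.ofReal * V.map Complex.ofReal - z • 1)⁻¹ *ᵥ
              Pi.single 0 1)) =
      (-((hh : ℂ) *
          (((fun j => ((Pi.single (Fin.last m) 1 : Fin (m + 1) → ℝ) j : ℂ)) ⬝ᵥ
            ((K.map Complex.ofReal)⁻¹ *ᵥ
              ((V.map Complex.ofReal)ᵀ * A.map Complex.ofReal * V.map Complex.ofReal
                - z • 1)⁻¹ *ᵥ Pi.single 0 1)) * (enorm₂ b : ℂ)))) •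
        (fun i => (v i : ℂ)) := by
  set f := Complex.ofRealHom
  have harnoldiℂ : A.map f * V.map f * K.map f =
      V.map f * H.map f + (hh : ℂ) • vecMulVec (f ∘ v) (f ∘ Pi.single (Fin.last m) 1) := by
    rw [← map_vecMulVec_s9, ← Matrix.map_smulₛₗ f Complex.ofReal hh (map_mul f hh),
      ← Matrix.map_mul, ← Matrix.map_mul, ← Matrix.map_mul, ← Matrix.map_add f (map_add f),
      harnoldi]
  have hHKℂ : (V.map f)ᵀ * A.map f * V.map f = H.map f * (K.map f)⁻¹ := by
    rw [map_nonsing_inv f hK, ← Matrix.map_mul, ← transpose_map, ← Matrix.map_mul,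
      ← Matrix.map_mul, hHK]
  have hbℂ : (fun i => f (b i)) = (enorm₂ b : ℂ) • (V.map f *ᵥ Pi.single 0 1) := by
    conv_lhs => rw [hb]
    ext i
    simp [f, Matrix.mulVec_single]
  have hMℂ : IsUnit (H.map f * (K.map f)⁻¹ - z • 1) := by
    rw [← hHKℂ]
    exact hAm
  have hresidual := galerkin_residual_of_rationalArnoldi harnoldiℂ (hK.map f.mapMatrix) hMℂ
    (enorm₂ b : ℂ) (Pi.single 0 1)
  rw [← hHKℂ, ← hbℂ] at hresidual
  -- `⇑Complex.ofRealHom` is `Complex.ofReal` only up to unfolding, so `exact` rather than `rw`.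
  exact hresidual

/-- When `ξ_m = ∞` (i.e. `k_{m+1,m} = 0`), the residual of the shifted Galerkin
approximation is collinear with the next basis vector `v_{m+1}`:
`r_m(z) = -h_{m+1,m} v_{m+1} (eₘᵀ Kₘ⁻¹ (Aₘ - zI)⁻¹ e₁) ‖b‖₂`. -/
theorem stmt_9 (n m : ℕ) (A : Matrix (Fin n) (Fin n) ℝ)
    (V : Matrix (Fin n) (Fin (m + 1)) ℝ) (v : Fin n → ℝ)
    (K H : Matrix (Fin (m + 1)) (Fin (m + 1)) ℝ) (hh : ℝ) (b : Fin n → ℝ) (z : ℂ)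
    (hVV : Vᵀ * V = 1) (hVv : Vᵀ *ᵥ v = 0) (hK : IsUnit K)
    (harnoldi : A * V * K = V * H + hh • Matrix.vecMulVec v (Pi.single (Fin.last m) 1))
    (hHK : Vᵀ * A * V = H * K⁻¹)
    (hb : b = enorm₂ b • (V *ᵥ Pi.single 0 1))
    (hAm : IsUnit ((V.map Complex.ofReal)ᵀ * A.map Complex.ofReal * V.map Complex.ofReal
      - z • 1)) :
    (fun i => (b i : ℂ)) -
        (A.map Complex.ofReal - z • 1) *ᵥ
          ((enorm₂ b : ℂ) • (V.map Complex.ofReal *ᵥ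
            ((V.map Complex.ofReal)ᵀ * A.map Complex.ofReal * V.map Complex.ofReal - z • 1)⁻¹ *ᵥ
              Pi.single 0 1)) =
      (-((hh : ℂ) *
          (((fun j => ((Pi.single (Fin.last m) 1 : Fin (m + 1) → ℝ) j : ℂ)) ⬝ᵥ
            ((K.map Complex.ofReal)⁻¹ *ᵥ
              ((V.map Complex.ofReal)ᵀ * A.map Complex.ofReal * V.map Complex.ofReal
                - z • 1)⁻¹ *ᵥ Pi.single 0 1)) * (enorm₂ b : ℂ)))) •
        (fun i => (v i : ℂ)) :=
  stmt_9_general n m A V v K H hh b z hK harnoldi hHK hb hAm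
end
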